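/- arXiv:2510.10825 — 8 statements merged into one kernel-verified Lean document; each statement's English description precedes it below -/
import Mathlib

section
/- Let T be a rooted (graph-theoretic or order-theoretic) tree in which every node has only finitely many immediate successors. Then the ray space R(T), consisting of all downward closed chains of T with no maximal element, is a compact topological space (with the subspace topology inherited from the product space 2^T ≅ P(T)). -/
open Set Topology

/-- An order-theoretic tree: every set of predecessors is a well-ordered chain. -/
def IsOrderTree (T : Type*) [PartialOrder T] : Prop :=
  ∀ t : T, (Set.Iio t).IsWF ∧ IsChain (· ≤ ·) (Set.Iio t)

/-- A ray: a nonempty, downward closed chain with no maximal element. -/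
def IsRay {T : Type*} [PartialOrder T] (R : Set T) : Prop :=
  R.Nonempty ∧ IsChain (· ≤ ·) R ∧ (∀ x ∈ R, ∀ y, y ≤ x → y ∈ R) ∧
    ∀ x ∈ R, ∃ y ∈ R, x < y

/-- The ray space of a tree. -/
def RaySpace (T : Type*) [PartialOrder T] := {R : Set T // IsRay R}

/-- The topology on the ray space, inherited from the product topology on `2^T`:
subbasic open sets are `[t] = {R : t ∈ R}` and their complements. -/
instance {T : Type*} [PartialOrder T] : TopologicalSpace (RaySpace T) :=
  TopologicalSpace.generateFrom
    {U | ∃ t : T, U = {R : RaySpace T | t ∈ R.val} ∨ U = {R : RaySpace T | t ∉ R.val}}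

/-- In an order tree, `x < y` implies there is a cover `s` of `x` below `y`. -/
lemma exists_covby_le_aux {T : Type*} [PartialOrder T] (htree : IsOrderTree T)
    {x y : T} (hxy : x < y) : ∃ s, x ⋖ s ∧ s ≤ y := by
  by_cases h : ∃ z, x < z ∧ z < y
  · set A : Set T := {z | x < z ∧ z < y} with hA
    have hAwf : A.IsWF := ((htree y).1).mono (fun z hz => hz.2)
    have hne : A.Nonempty := h
    refine ⟨hAwf.min hne, ⟨(hAwf.min_mem hne).1, ?_⟩, le_of_lt (hAwf.min_mem hne).2⟩
    intro w hw hws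
    exact hAwf.not_lt_min hne ⟨hw, hws.trans (hAwf.min_mem hne).2⟩ hws
  · exact ⟨y, ⟨hxy, fun w hw hwy => h ⟨w, hw, hwy⟩⟩, le_rfl⟩

/-- If every node of a rooted tree `T` has only finitely many immediate successors,
then the ray space `R(T)` is compact. -/
theorem rayspace_compact_of_finitely_branching {T : Type*} [PartialOrder T]
    (htree : IsOrderTree T) (r : T) (hroot : ∀ t : T, r ≤ t)
    (hfin : ∀ t : T, {s : T | t ⋖ s}.Finite) :
    CompactSpace (RaySpace T) := by
  classical
  set f : RaySpace T → (T → Bool) := fun R t => decide (t ∈ R.val) with hf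
  have hmem : ∀ (R : RaySpace T) (t : T), f R t = true ↔ t ∈ R.val := by
    intro R t; simp [hf]
  -- cylinder sets are clopen in `T → Bool`
  have hcyl : ∀ (t : T) (b : Bool), IsClopen {g : T → Bool | g t = b} := by
    intro t b
    have : {g : T → Bool | g t = b} = (fun g : T → Bool => g t) ⁻¹' {b} := rfl
    rw [this]
    exact (isClopen_discrete {b}).preimage (continuous_apply t)
  -- subbasic sets are of the form `f ⁻¹' cylinder`
  have hopen : ∀ (t : T) (b : Bool), IsOpen {R : RaySpace T | f R t = b} := by
    intro t b
    cases b
    · have : {R : RaySpace T | f R t = false} = {R : RaySpace T | t ∉ R.val} := by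
        ext R
        simp only [Set.mem_setOf_eq, ← hmem R t, Bool.not_eq_true]
      rw [this]
      exact TopologicalSpace.isOpen_generateFrom_of_mem ⟨t, Or.inr rfl⟩
    · have : {R : RaySpace T | f R t = true} = {R : RaySpace T | t ∈ R.val} := by
        ext R; exact hmem R t
      rw [this]
      exact TopologicalSpace.isOpen_generateFrom_of_mem ⟨t, Or.inl rfl⟩
  have hcont : Continuous f :=
    continuous_pi fun t => continuous_discrete_rng.2 fun b => hopen t b
  -- f is inducing
  have hind : IsInducing f := by
    refine ⟨le_antisymm (continuous_iff_le_induced.mp hcont) ?_⟩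
    show TopologicalSpace.induced f Pi.topologicalSpace ≤ TopologicalSpace.generateFrom _
    refine @le_generateFrom _ (TopologicalSpace.induced f Pi.topologicalSpace) _ ?_
    rintro s ⟨t, rfl | rfl⟩
    · exact ⟨{g | g t = true}, (hcyl t true).2, by ext R; exact hmem R t⟩
    · refine ⟨{g | g t = false}, (hcyl t false).2, ?_⟩
      ext R
      simp only [Set.mem_preimage, Set.mem_setOf_eq, ← hmem R t, Bool.not_eq_true]
  -- the range of f is closed
  have hrange : Set.range f =
      {g : T → Bool | g r = true} ∩
      (⋂ (t : T) (y : T) (_ : y ≤ t), {g : T → Bool | g t = true → g y = true}) ∩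
      (⋂ (t : T) (s : T) (_ : ¬(t ≤ s ∨ s ≤ t)), {g : T → Bool | ¬(g t = true ∧ g s = true)}) ∩
      (⋂ x : T, {g : T → Bool | g x = true → ∃ y, x ⋖ y ∧ g y = true}) := by
    ext g
    constructor
    · rintro ⟨R, rfl⟩
      obtain ⟨⟨x0, hx0⟩, hchain, hdown, hnomax⟩ := R.2
      refine ⟨⟨⟨?_, ?_⟩, ?_⟩, ?_⟩
      · exact (hmem R r).2 (hdown x0 hx0 r (hroot x0))
      · simp only [Set.mem_iInter, Set.mem_setOf_eq]
        intro t y hyt ht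
        exact (hmem R y).2 (hdown t ((hmem R t).1 ht) y hyt)
      · simp only [Set.mem_iInter, Set.mem_setOf_eq]
        intro t s hns ⟨ht, hs⟩
        rcases eq_or_ne t s with rfl | hne
        · exact hns (Or.inl le_rfl)
        · exact hns (hchain ((hmem R t).1 ht) ((hmem R s).1 hs) hne)
      · simp only [Set.mem_iInter, Set.mem_setOf_eq]
        intro x hx
        obtain ⟨z, hz, hxz⟩ := hnomax x ((hmem R x).1 hx)
        obtain ⟨s, hcs, hsz⟩ := exists_covby_le_aux htree hxz
        exact ⟨s, hcs, (hmem R s).2 (hdown z hz s hsz)⟩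
    · rintro ⟨⟨⟨h1, h2⟩, h3⟩, h4⟩
      simp only [Set.mem_iInter, Set.mem_setOf_eq] at h1 h2 h3 h4
      set R : Set T := {t | g t = true} with hR
      have hray : IsRay R := by
        refine ⟨⟨r, h1⟩, ?_, ?_, ?_⟩
        · intro t ht s hs hne
          by_contra hns
          exact h3 t s (by push_neg at hns ⊢; exact hns) ⟨ht, hs⟩
        · intro x hx y hyx
          rcases eq_or_lt_of_le hyx with rfl | hlt
          · exact hx
          · exact h2 x y hyx hx
        · intro x hx
          obtain ⟨y, hcy, hy⟩ := h4 x hx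
          exact ⟨y, hy, hcy.lt⟩
      refine ⟨⟨R, hray⟩, ?_⟩
      funext t
      rw [Bool.eq_iff_iff]
      exact (hmem ⟨R, hray⟩ t).trans Iff.rfl
  have hclosed : IsClosed (Set.range f) := by
    rw [hrange]
    refine IsClosed.inter (IsClosed.inter (IsClosed.inter ?_ ?_) ?_) ?_
    · exact (hcyl r true).1
    · refine isClosed_iInter fun t => isClosed_iInter fun y => isClosed_iInter fun _ => ?_
      have : {g : T → Bool | g t = true → g y = true} =
          {g : T → Bool | g t = false} ∪ {g : T → Bool | g y = true} := by
        ext g; by_cases h : g t = true <;> simp [h]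
      rw [this]
      exact (hcyl t false).1.union (hcyl y true).1
    · refine isClosed_iInter fun t => isClosed_iInter fun s => isClosed_iInter fun _ => ?_
      have : {g : T → Bool | ¬(g t = true ∧ g s = true)} =
          {g : T → Bool | g t = false} ∪ {g : T → Bool | g s = false} := by
        ext g; by_cases h : g t = true <;> simp [h]
      rw [this]
      exact (hcyl t false).1.union (hcyl s false).1
    · refine isClosed_iInter fun x => ?_
      have : {g : T → Bool | g x = true → ∃ y, x ⋖ y ∧ g y = true} =
          {g : T → Bool | g x = false} ∪ ⋃ y ∈ {s : T | x ⋖ s}, {g : T → Bool | g y = true} := by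
        ext g
        by_cases h : g x = true <;> simp [h]
      rw [this]
      exact (hcyl x false).1.union ((hfin x).isClosed_biUnion fun y _ => (hcyl y true).1)
  exact ⟨by rw [hind.isCompact_iff, Set.image_univ]; exact hclosed.isCompact⟩
end

section
/- Let T be a rooted tree and K ⊆ R(T) a compact subset of the ray space. Let T_K = ⋃K be the subtree of T consisting of all nodes lying on some ray in K. Then every node of T_K has only finitely many immediate successors in T_K, and consequently R(T_K) is compact. -/
open Set Topology

/-!
A ray through `t` inside `T_K` must pass through exactly one immediate successor of `t`
in `T_K` (the least node above `t` on it, which exists by well-foundedness), so the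
cylinders `[s]`, `s` an immediate successor of `t`, form a disjoint open cover of the
compact set `K ∩ [t]`; hence there are only finitely many of them.

For compactness of `R(T_K)`, take an ultrafilter `f` on it and let `L` be the set of nodes
`t` with `[t] ∈ f`. Since `[t] ∩ R(T_K)` is the finite union of the `[s]` over the immediate
successors `s` of `t` in `T_K`, one of them lies in `f`, so `L` has no maximal element; it
is thus a ray, and `f` converges to it because it contains every subbasic neighbourhood.
-/

namespace RaySpace

variable {T : Type*} [PartialOrder T]

def immSucc (S : Set T) (t : T) : Set T :=
  {s ∈ S | t < s ∧ ∀ u ∈ S, t < u → ¬ u < s}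

theorem isOpen_setOf_mem (t : T) : IsOpen {R : RaySpace T | t ∈ R.val} :=
  TopologicalSpace.isOpen_generateFrom_of_mem ⟨t, Or.inl rfl⟩

theorem isOpen_setOf_notMem (t : T) : IsOpen {R : RaySpace T | t ∉ R.val} :=
  TopologicalSpace.isOpen_generateFrom_of_mem ⟨t, Or.inr rfl⟩

theorem isClosed_setOf_mem (t : T) : IsClosed {R : RaySpace T | t ∈ R.val} :=
  isOpen_compl_iff.mp (isOpen_setOf_notMem t)

theorem mem_of_le (R : RaySpace T) {x y : T} (hx : x ∈ R.val) (hyx : y ≤ x) : y ∈ R.val :=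
  R.property.2.2.1 x hx y hyx

theorem exists_immSucc_mem (hwf : ∀ y : T, (Iio y).IsWF) {S R : Set T} (hR : IsRay R)
    (hRS : R ⊆ S) {t : T} (ht : t ∈ R) : ∃ s ∈ immSucc S t, s ∈ R := by
  obtain ⟨y, hyR, hty⟩ := hR.2.2.2 t ht
  set A := {u : T | t < u ∧ u ≤ y}
  have hAwf : A.IsWF := ((hwf y).insert y).mono fun u hu => hu.2.eq_or_lt
  have hAne : A.Nonempty := ⟨y, hty, le_rfl⟩
  have hmin : hAwf.min hAne ∈ A := hAwf.min_mem hAne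
  have hminR : hAwf.min hAne ∈ R := hR.2.2.1 y hyR _ hmin.2
  exact ⟨_, ⟨hRS hminR, hmin.1, fun u _ htu hu =>
    hAwf.not_lt_min hAne ⟨htu, hu.le.trans hmin.2⟩ hu⟩, hminR⟩

theorem eq_of_mem_immSucc {S R : Set T} (hR : IsChain (· ≤ ·) R) {t s s' : T}
    (hs : s ∈ immSucc S t) (hs' : s' ∈ immSucc S t) (hsR : s ∈ R) (hs'R : s' ∈ R) :
    s = s' := by
  by_contra hne
  rcases hR.total hsR hs'R with h | h
  · exact hs'.2.2 s hs.1 hs.2.1 (h.lt_of_ne hne)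
  · exact hs.2.2 s' hs'.1 hs'.2.1 (h.lt_of_ne (Ne.symm hne))

theorem finite_immSucc_of_isCompact (hwf : ∀ y : T, (Iio y).IsWF) {K : Set (RaySpace T)}
    (hK : IsCompact K) (t : T) : (immSucc (⋃ x ∈ K, x.val) t).Finite := by
  have hcover : K ∩ {R | t ∈ R.val} ⊆
      ⋃ s ∈ immSucc (⋃ x ∈ K, x.val) t, {R : RaySpace T | s ∈ R.val} := by
    rintro R ⟨hRK, htR⟩
    obtain ⟨s, hs, hsR⟩ := exists_immSucc_mem hwf R.property (subset_biUnion_of_mem hRK) htR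
    exact mem_biUnion hs hsR
  obtain ⟨F, hFsub, hF, hFcover⟩ :=
    (hK.inter_right (isClosed_setOf_mem t)).elim_finite_subcover_image
      (fun s _ => isOpen_setOf_mem s) hcover
  refine hF.subset fun s hs => ?_
  obtain ⟨x, hxK, hsx⟩ := mem_iUnion₂.mp hs.1
  obtain ⟨i, hiF, hix⟩ := mem_iUnion₂.mp (hFcover ⟨hxK, x.mem_of_le hsx hs.2.1.le⟩)
  rwa [← eq_of_mem_immSucc x.property.2.1 (hFsub hiF) hs hix hsx]

def limNodes (f : Ultrafilter (RaySpace T)) : Set T :=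
  {t | {R : RaySpace T | t ∈ R.val} ∈ f}

variable {f : Ultrafilter (RaySpace T)}

theorem limNodes_subset {S : Set T} (hS : {R : RaySpace T | R.val ⊆ S} ∈ f) :
    limNodes f ⊆ S := fun _ ht =>
  let ⟨_, htR, hRS⟩ := f.nonempty_of_mem (Filter.inter_mem ht hS)
  hRS htR

theorem isRay_limNodes (hwf : ∀ y : T, (Iio y).IsWF) {r : T} (hroot : ∀ t : T, r ≤ t)
    {S : Set T} (hS : {R : RaySpace T | R.val ⊆ S} ∈ f)
    (hfin : ∀ t ∈ S, (immSucc S t).Finite) : IsRay (limNodes f) := by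
  refine ⟨⟨r, Filter.univ_mem' fun R => ?_⟩, ?_, ?_, fun t ht => ?_⟩
  · obtain ⟨x, hx⟩ := R.property.1
    exact R.mem_of_le hx (hroot x)
  · intro a ha b hb hab
    obtain ⟨R, haR, hbR⟩ := f.nonempty_of_mem (Filter.inter_mem ha hb)
    exact R.property.2.1 haR hbR hab
  · exact fun x hx y hyx => Filter.mem_of_superset hx fun R hR => R.mem_of_le hR hyx
  · have hsucc : (⋃ s ∈ immSucc S t, {R : RaySpace T | s ∈ R.val}) ∈ f := by
      refine Filter.mem_of_superset (Filter.inter_mem ht hS) ?_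
      rintro R ⟨htR, hRS⟩
      obtain ⟨s, hs, hsR⟩ := exists_immSucc_mem hwf R.property hRS htR
      exact mem_biUnion hs hsR
    obtain ⟨s, hs, hsf⟩ :=
      (Ultrafilter.finite_biUnion_mem_iff (hfin t (limNodes_subset hS ht))).mp hsucc
    exact ⟨s, hsf, hs.2.1⟩

-- `(⟨limNodes f, hL⟩ : RaySpace T)` would elaborate in the subtype, which carries no topology.
theorem le_nhds_limNodes (hL : IsRay (limNodes f)) :
    (f : Filter (RaySpace T)) ≤ @nhds (RaySpace T) _ ⟨limNodes f, hL⟩ := by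
  refine TopologicalSpace.nhds_generateFrom.ge.trans' ?_
  refine le_iInf₂ fun U ⟨hLU, t, hU⟩ => Filter.le_principal_iff.mpr ?_
  rcases hU with rfl | rfl
  · exact hLU
  · exact Ultrafilter.compl_mem_iff_notMem.mpr hLU

end RaySpace

open RaySpace in
/-- If `K` is a compact subset of the ray space of a rooted tree `T`, and
`T_K = ⋃ K` is the subtree of all nodes lying on some ray in `K`, then every node of
`T_K` has only finitely many immediate successors in `T_K`, and the ray space
`R(T_K) = {R ∈ R(T) | R ⊆ T_K}` is compact. -/
theorem rayspace_of_union_of_compact {T : Type*} [PartialOrder T]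
    (htree : IsOrderTree T) (r : T) (hroot : ∀ t : T, r ≤ t)
    (K : Set (RaySpace T)) (hK : IsCompact K) :
    (∀ t ∈ ⋃ x ∈ K, (x : RaySpace T).val,
      {s ∈ ⋃ x ∈ K, (x : RaySpace T).val |
        t < s ∧ ∀ u ∈ ⋃ x ∈ K, (x : RaySpace T).val, t < u → ¬ u < s}.Finite) ∧
    IsCompact {R : RaySpace T | R.val ⊆ ⋃ x ∈ K, (x : RaySpace T).val} := by
  have hwf : ∀ y : T, (Iio y).IsWF := fun y => (htree y).1
  have hfin : ∀ t ∈ ⋃ x ∈ K, x.val,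
      (immSucc (⋃ x ∈ K, x.val) t).Finite :=
    fun t _ => finite_immSucc_of_isCompact hwf hK t
  refine ⟨hfin, isCompact_iff_ultrafilter_le_nhds.mpr fun f hf => ?_⟩
  have hS := hf (Filter.mem_principal_self _)
  have hL := isRay_limNodes hwf hroot hS hfin
  exact ⟨⟨limNodes f, hL⟩, limNodes_subset hS, le_nhds_limNodes hL⟩
end

section
/- Let T be a rooted tree and suppose ([t_i, F_i] : i ∈ I) is a partition of R(T) into standard basic open sets. Then the set {t_i : i ∈ I}, with the order induced from the tree order of T, is rayless: it contains no infinite chain that is cofinal in a ray of T (equivalently, the induced suborder contains no subset order-isomorphic to ω forming a ray). -/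
open Set Topology

/-- If `([t_i, F_i] : i ∈ I)` is a partition of the ray space of a rooted tree `T` into
standard basic sets (each `F i` a finite set of tops of some ray containing `t i`),
then the set `{t_i : i ∈ I}` with the induced order is rayless: it contains no nonempty
chain, downward closed in it, without a maximal element. -/
theorem partition_index_tree_rayless {T : Type*} [PartialOrder T]
    (htree : IsOrderTree T) (r : T) (hroot : ∀ t : T, r ≤ t)
    {I : Type*} (t : I → T) (F : I → Set T)
    (hF : ∀ i, (F i).Finite ∧ ∃ R : Set T, IsRay R ∧ t i ∈ R ∧ ∀ s ∈ F i, R = Set.Iio s)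
    (hpart : ∀ R : RaySpace T, ∃! i : I, t i ∈ R.val ∧ R.val ∩ F i = ∅) :
    ¬ ∃ C : Set T, C ⊆ Set.range t ∧ C.Nonempty ∧ IsChain (· ≤ ·) C ∧
        (∀ x ∈ C, ∀ y ∈ Set.range t, y ≤ x → y ∈ C) ∧ ∀ x ∈ C, ∃ y ∈ C, x < y := by
  rintro ⟨C, hCrange, hCne, hCchain, hCdown, hCnomax⟩
  -- any two elements below a common element are comparable
  have comp : ∀ c a b : T, a ≤ c → b ≤ c → a ≤ b ∨ b ≤ a := by
    intro c a b hac hbc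
    rcases eq_or_lt_of_le hac with rfl | ha
    · exact Or.inr hbc
    rcases eq_or_lt_of_le hbc with rfl | hb
    · exact Or.inl hac
    rcases eq_or_ne a b with rfl | hab
    · exact Or.inl le_rfl
    exact (htree c).2 ha hb hab
  -- the downward closure of C is a ray
  set R : Set T := {y | ∃ x ∈ C, y ≤ x} with hRdef
  have hCR : C ⊆ R := fun x hx => ⟨x, hx, le_rfl⟩
  have hRray : IsRay R := by
    refine ⟨hCne.mono hCR, ?_, ?_, ?_⟩
    · rintro y ⟨x, hx, hyx⟩ y' ⟨x', hx', hy'x⟩ _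
      have hxx' : x ≤ x' ∨ x' ≤ x := by
        rcases eq_or_ne x x' with rfl | h
        · exact Or.inl le_rfl
        · exact hCchain hx hx' h
      rcases hxx' with h | h
      · exact comp x' y y' (hyx.trans h) hy'x
      · exact comp x y y' hyx (hy'x.trans h)
    · rintro y ⟨x, hx, hyx⟩ z hzy
      exact ⟨x, hx, hzy.trans hyx⟩
    · rintro y ⟨x, hx, hyx⟩
      obtain ⟨z, hz, hxz⟩ := hCnomax x hx
      exact ⟨z, hCR hz, lt_of_le_of_lt hyx hxz⟩
  obtain ⟨i, ⟨htiR, hFi⟩, _⟩ := hpart ⟨R, hRray⟩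
  -- t i ∈ C
  have htiC : t i ∈ C := by
    obtain ⟨x, hx, hle⟩ := htiR
    exact hCdown x hx (t i) ⟨i, rfl⟩ hle
  -- pick t j ∈ C strictly above t i
  obtain ⟨y, hyC, hlt⟩ := hCnomax (t i) htiC
  obtain ⟨j, rfl⟩ := hCrange hyC
  have htjR : t j ∈ R := hCR hyC
  by_cases hFj : R ∩ F j = ∅
  · obtain ⟨k, hk, huniq⟩ := hpart ⟨R, hRray⟩
    have hik : i = k := huniq i ⟨htiR, hFi⟩
    have hjk : j = k := huniq j ⟨htjR, hFj⟩
    exact absurd (by rw [hik, hjk]) hlt.ne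
  · obtain ⟨s, hsR, hsF⟩ := Set.nonempty_iff_ne_empty.2 hFj
    obtain ⟨-, R'', hR''ray, htjR'', hall⟩ := hF j
    have hIio : R'' = Set.Iio s := hall s hsF
    have hIray : IsRay (Set.Iio s) := hIio ▸ hR''ray
    have htjI : t j ∈ Set.Iio s := hIio ▸ htjR''
    obtain ⟨k, _, huniq⟩ := hpart ⟨Set.Iio s, hIray⟩
    have hik : i = k := by
      refine huniq i ⟨lt_trans hlt htjI, ?_⟩
      ext u
      simp only [Set.mem_inter_iff, Set.mem_Iio, Set.mem_empty_iff_false, iff_false, not_and]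
      intro hus huF
      have huR : u ∈ R := hRray.2.2.1 s hsR u (le_of_lt hus)
      exact absurd hFi (Set.nonempty_iff_ne_empty.1 ⟨u, huR, huF⟩)
    have hjk : j = k := by
      refine huniq j ⟨htjI, ?_⟩
      ext u
      simp only [Set.mem_inter_iff, Set.mem_Iio, Set.mem_empty_iff_false, iff_false, not_and]
      intro hus huF
      have : Set.Iio u = Set.Iio s := (hall u huF).symm.trans hIio
      exact absurd (this ▸ hus : u ∈ Set.Iio u) (lt_irrefl u)
    exact absurd (by rw [hik, hjk]) hlt.ne
end

section
/- Let X be a topological space and (𝒰_n : n ∈ A), with A countably infinite, a sequence of countable open covers witnessing that X is not Menger (for every choice of finite ℱ_n ⊆ 𝒰_n, ⋃_{n∈A}⋃ℱ_n ≠ X). Then for every N ∈ A there exists an infinite subfamily 𝒱 ⊆ 𝒰_N such that for each V ∈ 𝒱 there is an infinite B_V ⊆ A for which (𝒰_n : n ∈ B_V) witnesses that V is not Menger. -/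
open Set

/-- The sequence of open covers `(𝒰 n : n ∈ A)` witnesses that `Y` is not Menger:
for every choice of finite `ℱ n ⊆ 𝒰 n` (`n ∈ A`), the sets chosen do not cover `Y`. -/
def WitnessNotMenger {X : Type*} [TopologicalSpace X]
    (A : Set ℕ) (𝒰 : ℕ → Set (Set X)) (Y : Set X) : Prop :=
  ∀ ℱ : ℕ → Set (Set X), (∀ n ∈ A, ℱ n ⊆ 𝒰 n ∧ (ℱ n).Finite) →
    ¬ Y ⊆ ⋃ n ∈ A, ⋃₀ ℱ n

/-- If `(𝒰 n : n ∈ A)` is a sequence of countable open covers of `X`, indexed by a countably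
infinite set `A`, witnessing that `X` is not Menger, then for every `N ∈ A` there exists an
infinite subfamily `𝒱 ⊆ 𝒰 N` such that for each `V ∈ 𝒱` there is an infinite `B_V ⊆ A` for
which `(𝒰 n : n ∈ B_V)` witnesses that `V` is not Menger. -/
theorem split_not_menger {X : Type*} [TopologicalSpace X]
    (A : Set ℕ) (hA : A.Infinite) (𝒰 : ℕ → Set (Set X))
    (hcount : ∀ n ∈ A, (𝒰 n).Countable)
    (hopen : ∀ n ∈ A, ∀ U ∈ 𝒰 n, IsOpen U)
    (hcover : ∀ n ∈ A, ⋃₀ 𝒰 n = Set.univ)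
    (hwit : WitnessNotMenger A 𝒰 Set.univ) :
    ∀ N ∈ A, ∃ 𝒱 ⊆ 𝒰 N, 𝒱.Infinite ∧
      ∀ V ∈ 𝒱, ∃ B ⊆ A, B.Infinite ∧ WitnessNotMenger B 𝒰 V := by
  classical
  intro N hN
  set 𝒱 : Set (Set X) := {V | V ∈ 𝒰 N ∧ ∃ B ⊆ A, B.Infinite ∧ WitnessNotMenger B 𝒰 V}
    with h𝒱def
  refine ⟨𝒱, fun V hV => hV.1, ?_, fun V hV => hV.2⟩
  by_contra hfin
  rw [Set.not_infinite] at hfin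
  -- enumerate the "good" sets (plus ∅)
  have hWc : ((𝒰 N \ 𝒱) ∪ {∅} : Set (Set X)).Countable :=
    (((hcount N hN).mono diff_subset)).union (countable_singleton _)
  obtain ⟨f, hf⟩ := hWc.exists_eq_range ⟨∅, Or.inr rfl⟩
  -- embedding of ℕ into A \ {N}, used with pairing to get disjoint infinite subsets
  have hAN : (A \ {N}).Infinite := hA.diff (finite_singleton N)
  let e := hAN.natEmbedding
  let a : ℕ → ℕ → ℕ := fun k j => (e (Nat.pair k j) : ℕ)
  have ha_mem : ∀ k j, a k j ∈ A \ {N} := fun k j => (e (Nat.pair k j)).2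
  have ha_inj : ∀ {k j k' j'}, a k j = a k' j' → k = k' ∧ j = j' := by
    intro k j k' j' h
    have : (Nat.pair k j) = (Nat.pair k' j') := e.injective (Subtype.val_injective h)
    exact Nat.pair_eq_pair.mp this
  -- each f k can be covered by finite selections over range (a k)
  have hgood : ∀ k, ¬ WitnessNotMenger (range (a k)) 𝒰 (f k) := by
    intro k hw
    have hfk : f k ∈ (𝒰 N \ 𝒱) ∪ ({∅} : Set (Set X)) := by
      rw [hf]; exact ⟨k, rfl⟩
    rcases hfk with ⟨hfU, hfV⟩ | hfe
    · exact hfV ⟨hfU, range (a k), fun n ⟨j, hj⟩ => hj ▸ (ha_mem k j).1,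
        infinite_range_of_injective (fun j j' h => (ha_inj h).2), hw⟩
    · exact hw (fun _ => ∅) (fun n _ => ⟨empty_subset _, finite_empty⟩)
        (by simp at hfe; rw [hfe]; exact empty_subset _)
  have hgood' : ∀ k, ∃ ℱ : ℕ → Set (Set X),
      (∀ n ∈ range (a k), ℱ n ⊆ 𝒰 n ∧ (ℱ n).Finite) ∧
      f k ⊆ ⋃ n ∈ range (a k), ⋃₀ ℱ n := by
    intro k
    have := hgood k
    unfold WitnessNotMenger at this
    push_neg at this
    exact this
  choose ℱ hℱ1 hℱ2 using hgood'
  -- combined selection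
  let G : ℕ → Set (Set X) := fun n =>
    if n = N then 𝒱 else if h : ∃ k, n ∈ range (a k) then ℱ h.choose n else ∅
  have hGk : ∀ {n k}, n ∈ range (a k) → n ≠ N ∧ G n = ℱ k n := by
    intro n k hk
    have hne : n ≠ N := by
      obtain ⟨j, hj⟩ := hk
      intro h; exact (ha_mem k j).2 (by rw [hj, h]; rfl)
    have hex : ∃ k', n ∈ range (a k') := ⟨k, hk⟩
    have hkk : hex.choose = k := by
      obtain ⟨j', hj'⟩ := hex.choose_spec
      obtain ⟨j, hj⟩ := hk
      exact (ha_inj (hj'.trans hj.symm)).1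
    refine ⟨hne, ?_⟩
    show (if n = N then 𝒱 else if h : ∃ k, n ∈ range (a k) then ℱ h.choose n else ∅) = ℱ k n
    rw [if_neg hne, dif_pos hex, hkk]
  apply hwit G
  · intro n hnA
    by_cases hn : n = N
    · subst hn
      simpa [G] using ⟨fun V hV => hV.1, hfin⟩
    · have hGeq : G n = if h : ∃ k, n ∈ range (a k) then ℱ h.choose n else ∅ := if_neg hn
      rw [hGeq]
      by_cases hex : ∃ k, n ∈ range (a k)
      · rw [dif_pos hex]
        exact hℱ1 hex.choose n hex.choose_spec
      · rw [dif_neg hex]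
        exact ⟨empty_subset _, finite_empty⟩
  · intro x _
    have hx : x ∈ ⋃₀ 𝒰 N := by rw [hcover N hN]; trivial
    obtain ⟨U, hU, hxU⟩ := hx
    by_cases hUV : U ∈ 𝒱
    · refine mem_biUnion hN ?_
      have : G N = 𝒱 := if_pos rfl
      rw [this]
      exact ⟨U, hUV, hxU⟩
    · have hUW : U ∈ (𝒰 N \ 𝒱) ∪ ({∅} : Set (Set X)) := Or.inl ⟨hU, hUV⟩
      rw [hf] at hUW
      obtain ⟨k, hk⟩ := hUW
      have hxk : x ∈ ⋃ n ∈ range (a k), ⋃₀ ℱ k n := hℱ2 k (hk ▸ hxU)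
      simp only [mem_iUnion, exists_prop] at hxk
      obtain ⟨n, hnr, hxn⟩ := hxk
      obtain ⟨j, hj⟩ := hnr
      have hnA : n ∈ A := hj ▸ (ha_mem k j).1
      obtain ⟨_, hGn⟩ := hGk ⟨j, hj⟩
      exact mem_biUnion hnA (hGn ▸ hxn)
end

section
/- Let T be a rooted tree with no subset order-isomorphic to the binary tree 2^{<ω}. Then the ray space R(T) is scattered: every nonempty subset of R(T) has an isolated point. -/
open Set Topology

/-- In a chain all of whose elements have well-founded sets of predecessors,
every nonempty subset has a least element. -/
lemma ray_least {T : Type*} [PartialOrder T] (htree : IsOrderTree T) {R A : Set T}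
    (hR : IsChain (· ≤ ·) R) (hAR : A ⊆ R) (hA : A.Nonempty) :
    ∃ m ∈ A, ∀ x ∈ A, m ≤ x := by
  obtain ⟨y, hy⟩ := hA
  by_cases h : (A ∩ Set.Iio y).Nonempty
  · have hwf : (A ∩ Set.Iio y).IsWF := ((htree y).1).mono Set.inter_subset_right
    have hmA := hwf.min_mem h
    refine ⟨hwf.min h, hmA.1, fun x hx => ?_⟩
    rcases eq_or_ne x (hwf.min h) with rfl | hne
    · exact le_refl _
    rcases hR (hAR hx) (hAR hmA.1) hne with h1 | h1
    · exact absurd (lt_of_le_of_ne h1 hne)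
        (hwf.not_lt_min h ⟨hx, (lt_of_le_of_ne h1 hne).trans hmA.2⟩)
    · exact h1
  · refine ⟨y, hy, fun x hx => ?_⟩
    rcases eq_or_ne x y with rfl | hne
    · exact le_refl _
    rcases hR (hAR hx) (hAR hy) hne with h1 | h1
    · exact absurd ⟨x, Set.mem_inter hx (Set.mem_Iio.mpr (lt_of_le_of_ne h1 hne))⟩ h
    · exact h1

/-- Prefix trichotomy for lists of booleans. -/
lemma pre_tri : ∀ a b : List Bool, a <+: b ∨ b <+: a ∨
    ∃ (c : List Bool) (x y : Bool), x ≠ y ∧ c ++ [x] <+: a ∧ c ++ [y] <+: b := by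
  intro a
  induction a with
  | nil => exact fun b => Or.inl List.nil_prefix
  | cons x a ih =>
    intro b
    cases b with
    | nil => exact Or.inr (Or.inl List.nil_prefix)
    | cons y b =>
      by_cases hxy : x = y
      · subst hxy
        rcases ih b with h | h | ⟨c, p, q, hpq, h1, h2⟩
        · exact Or.inl (List.cons_prefix_cons.mpr ⟨rfl, h⟩)
        · exact Or.inr (Or.inl (List.cons_prefix_cons.mpr ⟨rfl, h⟩))
        · exact Or.inr (Or.inr ⟨x :: c, p, q, hpq,
            List.cons_prefix_cons.mpr ⟨rfl, h1⟩,
            List.cons_prefix_cons.mpr ⟨rfl, h2⟩⟩)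
      · exact Or.inr (Or.inr ⟨[], x, y, hxy,
          List.cons_prefix_cons.mpr ⟨rfl, List.nil_prefix⟩,
          List.cons_prefix_cons.mpr ⟨rfl, List.nil_prefix⟩⟩)

/-- If a rooted tree `T` has no subset order-isomorphic to the binary tree `2^{<ω}`,
then the ray space `R(T)` is scattered: every nonempty subset has an isolated point. -/
theorem rayspace_scattered_of_no_binary_subtree {T : Type*} [PartialOrder T]
    (htree : IsOrderTree T) (r : T) (hroot : ∀ t : T, r ≤ t)
    (hnob : ¬ ∃ φ : List Bool → T, ∀ s t : List Bool, s <+: t ↔ φ s ≤ φ t) :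
    ∀ S : Set (RaySpace T), S.Nonempty →
      ∃ x ∈ S, ∃ U : Set (RaySpace T), IsOpen U ∧ U ∩ S = {x} := by
  intro S hS
  classical
  have hroot_mem : ∀ R : RaySpace T, r ∈ R.val := by
    rintro ⟨R, ⟨⟨x, hx⟩, hch, hdc, hnm⟩⟩
    exact hdc x hx r (hroot x)
  have hopen_mem : ∀ t : T, IsOpen {R : RaySpace T | t ∈ R.val} := fun t =>
    TopologicalSpace.GenerateOpen.basic _ ⟨t, Or.inl rfl⟩
  have hopen_not : ∀ t : T, IsOpen {R : RaySpace T | t ∉ R.val} := fun t =>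
    TopologicalSpace.GenerateOpen.basic _ ⟨t, Or.inr rfl⟩
  set Pt : T → Prop := fun t => ∃ R ∈ S, t ∈ R.val with hPtdef
  by_cases hsplit : ∀ t : T, Pt t → ∃ R₁ ∈ S, ∃ R₂ ∈ S, t ∈ R₁.val ∧ t ∈ R₂.val ∧
      ∃ u₁ u₂, u₁ ∈ R₁.val ∧ u₁ ∉ R₂.val ∧ u₂ ∈ R₂.val ∧ u₂ ∉ R₁.val
  · -- splitting everywhere: build a binary subtree, contradiction
    exfalso
    apply hnob
    have key : ∀ t : T, ∃ u : Bool → T, Pt t →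
        (∀ b, t < u b ∧ Pt (u b)) ∧ ¬ u false ≤ u true ∧ ¬ u true ≤ u false := by
      intro t
      by_cases ht : Pt t
      · obtain ⟨R₁, hR₁S, R₂, hR₂S, ht₁, ht₂, u₁, u₂, hu₁, hu₁n, hu₂, hu₂n⟩ := hsplit t ht
        have hinc₁ : ¬ u₁ ≤ u₂ := fun h => hu₁n (R₂.2.2.2.1 u₂ hu₂ u₁ h)
        have hinc₂ : ¬ u₂ ≤ u₁ := fun h => hu₂n (R₁.2.2.2.1 u₁ hu₁ u₂ h)
        have hne₁ : u₁ ≠ t := fun e => hu₁n (e ▸ ht₂)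
        have hne₂ : u₂ ≠ t := fun e => hu₂n (e ▸ ht₁)
        have hlt₁ : t < u₁ := by
          rcases R₁.2.2.1 hu₁ ht₁ hne₁ with h | h
          · exact absurd (R₂.2.2.2.1 t ht₂ u₁ h) hu₁n
          · exact lt_of_le_of_ne h (fun e => hne₁ e.symm)
        have hlt₂ : t < u₂ := by
          rcases R₂.2.2.1 hu₂ ht₂ hne₂ with h | h
          · exact absurd (R₁.2.2.2.1 t ht₁ u₂ h) hu₂n
          · exact lt_of_le_of_ne h (fun e => hne₂ e.symm)
        refine ⟨fun b => cond b u₂ u₁, fun _ => ⟨?_, hinc₁, hinc₂⟩⟩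
        intro b
        cases b
        · exact ⟨hlt₁, ⟨R₁, hR₁S, hu₁⟩⟩
        · exact ⟨hlt₂, ⟨R₂, hR₂S, hu₂⟩⟩
      · exact ⟨fun _ => t, fun h => absurd h ht⟩
    choose u hu using key
    set g : List Bool → T := fun l => l.foldr (fun b t => u t b) r with hgdef
    have hgcons : ∀ b l, g (b :: l) = u (g l) b := fun _ _ => rfl
    have hPg : ∀ l, Pt (g l) := by
      intro l
      induction l with
      | nil =>
        obtain ⟨R, hR⟩ := hS
        exact ⟨R, hR, hroot_mem R⟩
      | cons b l ih => exact ((hu (g l) ih).1 b).2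
    have hlt : ∀ l b, g l < g (b :: l) := fun l b => ((hu (g l) (hPg l)).1 b).1
    have hinc : ∀ l, ¬ g (false :: l) ≤ g (true :: l) ∧ ¬ g (true :: l) ≤ g (false :: l) :=
      fun l => ⟨(hu (g l) (hPg l)).2.1, (hu (g l) (hPg l)).2.2⟩
    have hmono : ∀ c l, g l ≤ g (c ++ l) := by
      intro c
      induction c with
      | nil => exact fun l => le_refl _
      | cons b c ih => exact fun l => (ih l).trans (hlt (c ++ l) b).le
    have hstrict : ∀ c l, c ≠ [] → g l < g (c ++ l) := by
      intro c l hc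
      cases c with
      | nil => exact absurd rfl hc
      | cons b c => exact lt_of_le_of_lt (hmono c l) (hlt (c ++ l) b)
    have hle : ∀ a b : List Bool, g a ≤ g b → a <:+ b := by
      intro a b hab
      rcases pre_tri a.reverse b.reverse with h | h | ⟨c, p, q, hpq, h1, h2⟩
      · exact List.reverse_prefix.mp h
      · have h' : b <:+ a := List.reverse_prefix.mp h
        obtain ⟨d, hd⟩ := h'
        rcases eq_or_ne d [] with rfl | hdne
        · simp at hd; exact hd ▸ List.suffix_refl a
        · exact absurd hab (not_le_of_gt (hd ▸ hstrict d b hdne))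
      · exfalso
        have h1' : p :: c.reverse <:+ a := List.reverse_prefix.mp (by simpa using h1)
        have h2' : q :: c.reverse <:+ b := List.reverse_prefix.mp (by simpa using h2)
        obtain ⟨d1, hd1⟩ := h1'
        obtain ⟨d2, hd2⟩ := h2'
        set s := c.reverse with hs
        have ha' : g (p :: s) ≤ g b := le_trans (hd1 ▸ hmono d1 (p :: s)) hab
        have hb' : g (q :: s) ≤ g b := hd2 ▸ hmono d2 (q :: s)
        have hcomp : g (p :: s) ≤ g (q :: s) ∨ g (q :: s) ≤ g (p :: s) := by
          rcases eq_or_lt_of_le ha' with he | hl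
          · exact Or.inr (he ▸ hb')
          rcases eq_or_lt_of_le hb' with he2 | hl2
          · exact Or.inl (he2 ▸ ha')
          by_cases heq : g (p :: s) = g (q :: s)
          · exact Or.inl (heq ▸ le_refl _)
          · exact (htree (g b)).2 hl hl2 heq
        cases p <;> cases q <;> simp at hpq
        · rcases hcomp with h | h
          · exact (hinc s).1 h
          · exact (hinc s).2 h
        · rcases hcomp with h | h
          · exact (hinc s).2 h
          · exact (hinc s).1 h
    refine ⟨fun l => g l.reverse, fun s t => ⟨fun hst => ?_, fun hle' => ?_⟩⟩
    · obtain ⟨c, hc⟩ := List.reverse_suffix.mpr hst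
      show g s.reverse ≤ g t.reverse
      rw [← hc]
      exact hmono c s.reverse
    · have := hle s.reverse t.reverse hle'
      have h2 : s.reverse.reverse <+: t.reverse.reverse := List.reverse_prefix.mpr this
      simpa using h2
  · -- a non-splitting node: find an isolated point
    push_neg at hsplit
    obtain ⟨t, hPtt, hnsp⟩ := hsplit
    have hchain : ∀ R₁, R₁ ∈ S → t ∈ R₁.val → ∀ R₂, R₂ ∈ S → t ∈ R₂.val →
        R₁.val ⊆ R₂.val ∨ R₂.val ⊆ R₁.val := by
      intro R₁ h₁S ht₁ R₂ h₂S ht₂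
      by_cases h12 : R₁.val ⊆ R₂.val
      · exact Or.inl h12
      · obtain ⟨u₁, hu₁, hu₁n⟩ := Set.not_subset.mp h12
        exact Or.inr (fun u₂ hu₂ => hnsp R₁ h₁S R₂ h₂S ht₁ ht₂ u₁ u₂ hu₁ hu₁n hu₂)
    obtain ⟨R, hRS, htR⟩ := hPtt
    by_cases hA : ∃ x, x ∈ R.val ∧ ∃ R' ∈ S, t ∈ R'.val ∧ x ∉ R'.val
    · -- some ray in S through t is a proper subset of R
      set A : Set T := {x | x ∈ R.val ∧ ∃ R' ∈ S, t ∈ R'.val ∧ x ∉ R'.val} with hAdef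
      have hAsub : A ⊆ R.val := fun x (hx : x ∈ A) => hx.1
      have hAne : A.Nonempty := hA
      obtain ⟨m, hmA, hmin⟩ := ray_least htree R.2.2.1 hAsub hAne
      obtain ⟨hmR, R₁, hR₁S, htR₁, hmn⟩ := hmA
      have key : ∀ X, X ∈ S → t ∈ X.val → m ∉ X.val →
          X.val = {x | x ∈ R.val ∧ x < m} := by
        intro X hXS htX hmX
        have hXR : X.val ⊆ R.val := by
          rcases hchain X hXS htX R hRS htR with h | h
          · exact h
          · exact absurd (h hmR) hmX
        ext x
        constructor
        · intro hx
          refine ⟨hXR hx, ?_⟩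
          have hne : x ≠ m := fun e => hmX (e ▸ hx)
          rcases R.2.2.1 (hXR hx) hmR hne with h | h
          · exact lt_of_le_of_ne h hne
          · exact absurd (X.2.2.2.1 x hx m h) hmX
        · rintro ⟨hxR, hxm⟩
          by_contra hxX
          exact absurd hxm (not_lt_of_ge (hmin x ⟨hxR, X, hXS, htX, hxX⟩))
      refine ⟨R₁, hR₁S, {X | t ∈ X.val} ∩ {X | m ∉ X.val},
        (hopen_mem t).inter (hopen_not m), ?_⟩
      ext X
      simp only [Set.mem_inter_iff, Set.mem_setOf_eq, Set.mem_singleton_iff]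
      constructor
      · rintro ⟨⟨htX, hmX⟩, hXS⟩
        exact Subtype.ext ((key X hXS htX hmX).trans (key R₁ hR₁S htR₁ hmn).symm)
      · rintro rfl
        exact ⟨⟨htR₁, hmn⟩, hR₁S⟩
    · -- R is minimal among rays of S through t
      push_neg at hA
      have hsub : ∀ X, X ∈ S → t ∈ X.val → R.val ⊆ X.val :=
        fun X hXS htX x hx => hA x hx X hXS htX
      by_cases hB : ∃ R₂, R₂ ∈ S ∧ t ∈ R₂.val ∧ ∃ v, v ∈ R₂.val ∧ v ∉ R.val
      · obtain ⟨R₂, hR₂S, htR₂, hBne⟩ := hB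
        obtain ⟨w, hwB, hwmin⟩ := ray_least htree R₂.2.2.1
          (fun x (hx : x ∈ {x | x ∈ R₂.val ∧ x ∉ R.val}) => hx.1) hBne
        obtain ⟨hwR₂, hwR⟩ := hwB
        have hukey : ∀ X, X ∈ S → t ∈ X.val → X.val ≠ R.val → w ∈ X.val := by
          intro X hXS htX hne
          have hRX : R.val ⊆ X.val := hsub X hXS htX
          rcases hchain X hXS htX R₂ hR₂S htR₂ with h | h
          · have hv : ∃ v, v ∈ X.val ∧ v ∉ R.val := by
              by_contra h'
              push_neg at h'
              exact hne (Set.Subset.antisymm h' hRX)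
            obtain ⟨v, hvX, hvR⟩ := hv
            exact X.2.2.2.1 v hvX w (hwmin v ⟨h hvX, hvR⟩)
          · exact h hwR₂
        refine ⟨R, hRS, {X | t ∈ X.val} ∩ {X | w ∉ X.val},
          (hopen_mem t).inter (hopen_not w), ?_⟩
        ext X
        simp only [Set.mem_inter_iff, Set.mem_setOf_eq, Set.mem_singleton_iff]
        constructor
        · rintro ⟨⟨htX, hwX⟩, hXS⟩
          by_contra hXne
          exact hwX (hukey X hXS htX (fun e => hXne (Subtype.ext e)))
        · rintro rfl
          exact ⟨⟨htR, hwR⟩, hRS⟩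
      · -- S ∩ [t] = {R}
        push_neg at hB
        refine ⟨R, hRS, {X | t ∈ X.val}, hopen_mem t, ?_⟩
        ext X
        simp only [Set.mem_inter_iff, Set.mem_setOf_eq, Set.mem_singleton_iff]
        constructor
        · rintro ⟨htX, hXS⟩
          exact Subtype.ext (Set.Subset.antisymm
            (fun v hv => hB X hXS htX v hv)
            (hsub X hXS htX))
        · rintro rfl
          exact ⟨htR, hRS⟩
end

section
/- For a rooted tree T, the following are equivalent: (a) R(T) is scattered; (b) R(T) does not contain a topological copy of the Cantor space 2^ω; (c) T contains no subset order-isomorphic to the binary tree 2^{<ω}. -/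
/-!
A copy `φ` of `2^{<ω}` in `T` yields a Cantor set of rays: send `x ∈ 2^ω` to the ray generated
by the points `φ (x ↾ n)`. This map is continuous and injective on a compact space, hence an
embedding. Since the Cantor space has no isolated points, a scattered space contains no copy of it.

Conversely, let `S` be a nonempty set of rays without isolated points, and `t` a point on a ray of
`S`. The rays of `S` through `t` cannot all lie in one chain `D`: otherwise they are initial
segments of `D`, and since `T` is well-founded, either they all equal `D` (and `[t]` isolates one)
or the least point of `D` missed by one of them determines that ray (and `[t] ∩ [c₀]ᶜ` isolates
it). So above `t` there are two incomparable points on rays of `S`, and iterating this splitting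
embeds `2^{<ω}`.
-/

open Set Topology

namespace IsOrderTree

variable {T : Type*} [PartialOrder T]

theorem le_total_of_le (htree : IsOrderTree T) {a b c : T} (ha : a ≤ c) (hb : b ≤ c) :
    a ≤ b ∨ b ≤ a := by
  rcases ha.eq_or_lt with rfl | ha
  · exact Or.inr hb
  rcases hb.eq_or_lt with rfl | hb
  · exact Or.inl ha.le
  exact (htree c).2.total ha hb

theorem wellFoundedLT (htree : IsOrderTree T) : WellFoundedLT T :=
  ⟨⟨fun a => (Set.WellFoundedOn.acc_iff_wellFoundedOn.out 0 2).2 <| by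
    simp only [Relation.transGen_eq_self]; exact (htree a).1⟩⟩

end IsOrderTree

section RaySpace

variable {T : Type*} [PartialOrder T]

theorem isOpen_setOf_mem (t : T) : IsOpen {R : RaySpace T | t ∈ R.val} :=
  TopologicalSpace.GenerateOpen.basic _ ⟨t, Or.inl rfl⟩

theorem isOpen_setOf_not_mem (t : T) : IsOpen {R : RaySpace T | t ∉ R.val} :=
  TopologicalSpace.GenerateOpen.basic _ ⟨t, Or.inr rfl⟩

theorem RaySpace.mem_of_le_s10 (R : RaySpace T) {u v : T} (hu : u ∈ R.val) (hvu : v ≤ u) :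
    v ∈ R.val :=
  R.2.2.2.1 u hu v hvu

theorem RaySpace.le_total_of_mem (R : RaySpace T) {u v : T} (hu : u ∈ R.val) (hv : v ∈ R.val) :
    u ≤ v ∨ v ≤ u :=
  R.2.2.1.total hu hv

instance : T2Space (RaySpace T) := by
  classical
  refine T2Space.of_injective_continuous (f := fun (R : RaySpace T) (t : T) => decide (t ∈ R.val))
    (fun R R' h => Subtype.ext <| Set.ext fun t => by simpa using congrFun h t) ?_
  refine continuous_pi fun t => continuous_discrete_rng.2 fun b => ?_
  cases b
  · convert isOpen_setOf_not_mem t using 1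
    ext; simp
  · convert isOpen_setOf_mem t using 1
    ext; simp

end RaySpace

instance nhdsNE_neBot_nat_pi {α : Type*} [TopologicalSpace α] [Nontrivial α] (c : ℕ → α) :
    (𝓝[≠] c).NeBot := by
  choose d hd using fun n => exists_ne (c n)
  have hlim : Filter.Tendsto (fun n => Function.update c n (d n)) Filter.atTop (𝓝 c) :=
    tendsto_pi_nhds.2 fun i => tendsto_atTop_of_eventually_const (i₀ := i + 1) fun n hn =>
      Function.update_of_ne (by omega) _ _
  exact mem_closure_iff_nhdsWithin_neBot.1 <| mem_closure_of_tendsto hlim <|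
    Filter.Eventually.of_forall fun n h => hd n (by simpa using congrFun h n)

theorem not_exists_isEmbedding_cantor {X : Type*} [TopologicalSpace X]
    (hX : ∀ S : Set X, S.Nonempty → ∃ x ∈ S, ∃ U : Set X, IsOpen U ∧ U ∩ S = {x}) :
    ¬ ∃ f : (ℕ → Bool) → X, IsEmbedding f := by
  rintro ⟨f, hf⟩
  obtain ⟨_, ⟨c, rfl⟩, U, hU, hUS⟩ := hX (range f) (range_nonempty f)
  have hpre : f ⁻¹' U = {c} := by
    rw [← preimage_inter_range, hUS, ← image_singleton, hf.injective.preimage_image]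
  exact not_isOpen_singleton c (hpre ▸ hU.preimage hf.continuous)

section InitSeg

variable {α : Type*}

def initSeg (x : ℕ → α) (n : ℕ) : List α := (List.range n).map x

@[simp]
theorem length_initSeg (x : ℕ → α) (n : ℕ) : (initSeg x n).length = n := by
  simp [initSeg]

theorem initSeg_prefix_initSeg (x : ℕ → α) {n m : ℕ} (h : n ≤ m) :
    initSeg x n <+: initSeg x m := by
  rw [List.prefix_iff_eq_take]
  simp [initSeg, ← List.map_take, List.take_range, min_eq_left h]

theorem apply_eq_of_initSeg_prefix {x y : ℕ → α} {n m : ℕ} (h : initSeg x n <+: initSeg y m)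
    {i : ℕ} (hi : i < n) : x i = y i := by
  simpa [initSeg] using h.getElem (i := i) (by simpa using hi)

theorem initSeg_eq_of_mem_cylinder {x y : ℕ → α} {n : ℕ} (h : y ∈ PiNat.cylinder x n) :
    initSeg y n = initSeg x n :=
  List.map_congr_left fun i hi => h i (List.mem_range.1 hi)

end InitSeg

section CantorEmbedding

variable {T : Type*} [PartialOrder T]

theorem isRay_setOf_exists_le (htree : IsOrderTree T) {a : ℕ → T} (ha : StrictMono a) :
    IsRay {u | ∃ n, u ≤ a n} := by
  refine ⟨⟨a 0, 0, le_rfl⟩, ?_, fun u ⟨n, hn⟩ v hv => ⟨n, hv.trans hn⟩, ?_⟩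
  · rintro u ⟨n, hn⟩ v ⟨m, hm⟩ -
    exact htree.le_total_of_le (hn.trans (ha.monotone (le_max_left n m)))
      (hm.trans (ha.monotone (le_max_right n m)))
  · rintro u ⟨n, hn⟩
    exact ⟨a (n + 1), ⟨n + 1, le_rfl⟩, hn.trans_lt (ha n.lt_succ_self)⟩

variable {α : Type*} {φ : List α → T}

theorem isOpen_setOf_exists_le_branch [TopologicalSpace α] [DiscreteTopology α] (t : T) :
    IsOpen {x : ℕ → α | ∃ n, t ≤ φ (initSeg x n)} := by
  rw [isOpen_iff_mem_nhds]
  rintro x ⟨n, hn⟩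
  filter_upwards [(PiNat.isOpen_cylinder _ x n).mem_nhds (PiNat.self_mem_cylinder x n)] with y hy
  exact ⟨n, initSeg_eq_of_mem_cylinder hy ▸ hn⟩

theorem strictMono_branch (hφ : ∀ s t : List α, s <+: t ↔ φ s ≤ φ t) (x : ℕ → α) :
    StrictMono fun n => φ (initSeg x n) := by
  refine strictMono_nat_of_lt_succ fun n => lt_of_le_of_ne
    ((hφ _ _).1 (initSeg_prefix_initSeg x n.le_succ)) fun h => ?_
  simpa using ((hφ _ _).2 h.ge).length_le

theorem isOpen_setOf_not_exists_le_branch [TopologicalSpace α] [DiscreteTopology α]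
    (htree : IsOrderTree T) (hφ : ∀ s t : List α, s <+: t ↔ φ s ≤ φ t) (t : T) :
    IsOpen {x : ℕ → α | ¬ ∃ n, t ≤ φ (initSeg x n)} := by
  rw [isOpen_iff_mem_nhds]
  intro x hx
  by_cases hbelow : ∀ N, φ (initSeg x N) ≤ t
  · -- a branch reaching `t` at level `n` then has the same first `n` values as `x`
    refine Filter.univ_mem' fun y ⟨n, hty⟩ => hx ⟨n, ?_⟩
    have hpre := (hφ _ _).2 ((hbelow n).trans hty)
    rwa [hpre.eq_of_length (by simp)]
  · obtain ⟨N, hN⟩ := not_forall.1 hbelow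
    filter_upwards [(PiNat.isOpen_cylinder _ x N).mem_nhds (PiNat.self_mem_cylinder x N)]
      with y hy ⟨n, hty⟩
    have hxN : φ (initSeg x N) ≤ φ (initSeg y (max n N)) := by
      rw [← initSeg_eq_of_mem_cylinder hy]
      exact (strictMono_branch hφ y).monotone (le_max_right n N)
    have hty' := hty.trans ((strictMono_branch hφ y).monotone (le_max_left n N))
    exact (htree.le_total_of_le hty' hxN).elim (fun h => hx ⟨N, h⟩) hN

theorem exists_isEmbedding_cantor_of_binaryTree (htree : IsOrderTree T) {φ : List Bool → T}
    (hφ : ∀ s t : List Bool, s <+: t ↔ φ s ≤ φ t) :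
    ∃ f : (ℕ → Bool) → RaySpace T, IsEmbedding f := by
  let f : (ℕ → Bool) → RaySpace T := fun x =>
    ⟨{u | ∃ n, u ≤ φ (initSeg x n)}, isRay_setOf_exists_le htree (strictMono_branch hφ x)⟩
  have hinj : Function.Injective f := by
    intro x y hxy
    funext n
    obtain ⟨m, hm⟩ : φ (initSeg x (n + 1)) ∈ (f y).val := hxy ▸ ⟨n + 1, le_rfl⟩
    exact apply_eq_of_initSeg_prefix ((hφ _ _).2 hm) n.lt_succ_self
  have hcont : Continuous f := by
    refine continuous_generateFrom_iff.2 ?_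
    rintro _ ⟨t, rfl | rfl⟩
    · exact isOpen_setOf_exists_le_branch t
    · exact isOpen_setOf_not_exists_le_branch htree hφ t
  exact ⟨f, (hcont.isClosedEmbedding hinj).isEmbedding⟩

end CantorEmbedding

section BinaryTree

variable {α : Type*} [PartialOrder α] {q : α → Bool → α}

theorem le_foldl_of_lt (hlt : ∀ a b, a < q a b) (s : List Bool) (a : α) : a ≤ s.foldl q a := by
  induction s generalizing a with
  | nil => exact le_rfl
  | cons b s ih => exact (hlt a b).le.trans (ih (q a b))

theorem foldl_le_foldl_iff_prefix (hcomp : ∀ {a b c : α}, a ≤ c → b ≤ c → a ≤ b ∨ b ≤ a)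
    (hlt : ∀ a b, a < q a b) (hsplit : ∀ a b b', b ≠ b' → ¬ q a b ≤ q a b')
    (s u : List Bool) (a : α) : s.foldl q a ≤ u.foldl q a ↔ s <+: u := by
  refine ⟨fun h => ?_, fun ⟨w, hw⟩ => hw ▸ by
    simpa only [List.foldl_append] using le_foldl_of_lt hlt w (s.foldl q a)⟩
  induction s generalizing u a with
  | nil => exact List.nil_prefix
  | cons b s ih =>
    cases u with
    | nil => exact absurd h (not_le_of_gt ((hlt a b).trans_le (le_foldl_of_lt hlt s _)))
    | cons b' u =>
      by_cases hb : b = b'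
      · subst hb
        exact (List.prefix_cons_inj b).2 (ih u (q a b) h)
      · exact ((hcomp ((le_foldl_of_lt hlt s _).trans h) (le_foldl_of_lt hlt u _)).elim
          (hsplit a b b' hb) (hsplit a b' b (Ne.symm hb))).elim

theorem exists_binaryTree_of_splitting [Nonempty α]
    (hcomp : ∀ {a b c : α}, a ≤ c → b ≤ c → a ≤ b ∨ b ≤ a)
    (hsplit : ∀ a : α, ∃ a₀ a₁, a < a₀ ∧ a < a₁ ∧ ¬ a₀ ≤ a₁ ∧ ¬ a₁ ≤ a₀) :
    ∃ φ : List Bool → α, ∀ s t : List Bool, s <+: t ↔ φ s ≤ φ t := by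
  choose a₀ a₁ h₀ h₁ h₀₁ h₁₀ using hsplit
  let q : α → Bool → α := fun a b => bif b then a₁ a else a₀ a
  have hlt : ∀ a b, a < q a b := fun a b => by cases b <;> simp [q, h₀, h₁]
  have hq : ∀ a b b', b ≠ b' → ¬ q a b ≤ q a b' := by
    intro a b b' hb
    cases b <;> cases b' <;> simp_all [q]
  exact ⟨fun s => s.foldl q (Classical.arbitrary α), fun s t =>
    (foldl_le_foldl_iff_prefix hcomp hlt hq s t _).symm⟩

end BinaryTree

section IsolatedRays

variable {T : Type*} [PartialOrder T]

theorem exists_isolated_of_isChain_biUnion (htree : IsOrderTree T) {S : Set (RaySpace T)}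
    (hS : S.Nonempty) (hchain : IsChain (· ≤ ·) (⋃ R ∈ S, R.val)) :
    ∃ x ∈ S, ∃ U : Set (RaySpace T), IsOpen U ∧ U ∩ S = {x} := by
  set D := ⋃ R ∈ S, R.val
  have hsub : ∀ R ∈ S, R.val ⊆ D := fun R hR => subset_biUnion_of_mem (u := Subtype.val) hR
  by_cases hN : {c | c ∈ D ∧ ∃ R ∈ S, c ∉ R.val}.Nonempty
  · obtain ⟨c₀, ⟨hc₀D, R₀, hR₀, hc₀R₀⟩, hmin⟩ := htree.wellFoundedLT.wf.has_min _ hN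
    have hR_eq : ∀ R ∈ S, c₀ ∉ R.val → R.val = {u | u ∈ D ∧ u < c₀} := by
      intro R hR hc₀R
      ext u
      refine ⟨fun hu => ⟨hsub R hR hu, ?_⟩, fun ⟨huD, hlt⟩ => ?_⟩
      · refine ((hchain.total (hsub R hR hu) hc₀D).resolve_right
          fun h => hc₀R (R.mem_of_le_s10 hu h)).lt_of_ne ?_
        rintro rfl
        exact hc₀R hu
      · by_contra hu
        exact hmin u ⟨huD, R, hR, hu⟩ hlt
    refine ⟨R₀, hR₀, {R | c₀ ∉ R.val}, isOpen_setOf_not_mem c₀, ?_⟩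
    ext R
    refine ⟨fun ⟨hc₀R, hR⟩ => Subtype.ext ?_, fun h => h ▸ ⟨hc₀R₀, hR₀⟩⟩
    rw [hR_eq R hR hc₀R, hR_eq R₀ hR₀ hc₀R₀]
  · have hR_eq : ∀ R ∈ S, R.val = D := fun R hR =>
      (hsub R hR).antisymm fun c hc => by_contra fun hcR => hN ⟨c, hc, R, hR, hcR⟩
    obtain ⟨R₀, hR₀⟩ := hS
    refine ⟨R₀, hR₀, univ, isOpen_univ, ?_⟩
    ext R
    refine ⟨fun ⟨_, hR⟩ => Subtype.ext ?_, fun h => h ▸ ⟨trivial, hR₀⟩⟩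
    rw [hR_eq R hR, hR_eq R₀ hR₀]

theorem exists_incomparable_above_of_forall_not_isolated (htree : IsOrderTree T)
    {S : Set (RaySpace T)} (hS : ∀ x ∈ S, ∀ U : Set (RaySpace T), IsOpen U → U ∩ S ≠ {x})
    {R : RaySpace T} (hR : R ∈ S) {t : T} (ht : t ∈ R.val) :
    ∃ p₀ ∈ ⋃ R ∈ S, R.val, ∃ p₁ ∈ ⋃ R ∈ S, R.val, t < p₀ ∧ t < p₁ ∧ ¬ p₀ ≤ p₁ ∧ ¬ p₁ ≤ p₀ := by
  set St := {R : RaySpace T | t ∈ R.val} ∩ S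
  have hsub : ⋃ R ∈ St, R.val ⊆ ⋃ R ∈ S, R.val :=
    biUnion_mono inter_subset_right fun _ _ => le_rfl
  have hnot : ¬ IsChain (· ≤ ·) (⋃ R ∈ St, R.val) := fun hchain => by
    obtain ⟨x, hx, U, hU, hUx⟩ :=
      exists_isolated_of_isChain_biUnion htree (S := St) ⟨R, ht, hR⟩ hchain
    exact hS x hx.2 _ (hU.inter (isOpen_setOf_mem t)) (by rwa [inter_assoc])
  simp only [IsChain, Set.Pairwise, not_forall] at hnot
  obtain ⟨u, hu, v, hv, -, huv⟩ := hnot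
  have above : ∀ u ∈ ⋃ R ∈ St, R.val, ∀ v ∈ ⋃ R ∈ St, R.val, ¬ (u ≤ v ∨ v ≤ u) → t < u := by
    intro u hu v hv huv
    obtain ⟨R₁, ⟨htR₁, -⟩, hu₁⟩ := mem_iUnion₂.1 hu
    obtain ⟨R₂, ⟨htR₂, -⟩, hv₂⟩ := mem_iUnion₂.1 hv
    have hut : ¬ u ≤ t := fun hut => huv <| (R₂.le_total_of_mem hv₂ htR₂).elim
      (fun hvt => htree.le_total_of_le hut hvt) (fun htv => Or.inl (hut.trans htv))
    exact lt_of_le_not_ge ((R₁.le_total_of_mem hu₁ htR₁).resolve_left hut) hut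
  exact ⟨u, hsub hu, v, hsub hv, above u hu v hv huv, above v hv u hu (huv ∘ Or.symm),
    fun h => huv (Or.inl h), fun h => huv (Or.inr h)⟩

theorem exists_binaryTree_of_forall_not_isolated (htree : IsOrderTree T) {S : Set (RaySpace T)}
    (hSne : S.Nonempty) (hS : ∀ x ∈ S, ∀ U : Set (RaySpace T), IsOpen U → U ∩ S ≠ {x}) :
    ∃ φ : List Bool → T, ∀ s t : List Bool, s <+: t ↔ φ s ≤ φ t := by
  obtain ⟨R, hR⟩ := hSne
  obtain ⟨t, ht⟩ := R.2.1
  have : Nonempty (⋃ R ∈ S, R.val) := ⟨⟨t, mem_biUnion hR ht⟩⟩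
  obtain ⟨φ, hφ⟩ := exists_binaryTree_of_splitting (α := ⋃ R ∈ S, R.val)
    (fun ha hb => htree.le_total_of_le ha hb) fun ⟨t, ht⟩ => by
      obtain ⟨R, hR, htR⟩ := mem_iUnion₂.1 ht
      obtain ⟨p₀, hp₀, p₁, hp₁, h⟩ :=
        exists_incomparable_above_of_forall_not_isolated htree hS hR htR
      exact ⟨⟨p₀, hp₀⟩, ⟨p₁, hp₁⟩, h⟩
  exact ⟨fun s => φ s, hφ⟩

end IsolatedRays

theorem rayspace_scattered_tfae_general {T : Type*} [PartialOrder T]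
    (htree : IsOrderTree T) :
    List.TFAE
      [∀ S : Set (RaySpace T), S.Nonempty →
          ∃ x ∈ S, ∃ U : Set (RaySpace T), IsOpen U ∧ U ∩ S = {x},
        ¬ ∃ f : (ℕ → Bool) → RaySpace T, Topology.IsEmbedding f,
        ¬ ∃ φ : List Bool → T, ∀ s t : List Bool, s <+: t ↔ φ s ≤ φ t] := by
  tfae_have 1 → 2 := not_exists_isEmbedding_cantor
  tfae_have 2 → 3 := fun h ⟨φ, hφ⟩ => h (exists_isEmbedding_cantor_of_binaryTree htree hφ)
  tfae_have 3 → 1 := by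
    intro h S hSne
    by_contra hS
    exact h (exists_binaryTree_of_forall_not_isolated htree hSne
      fun x hx U hU hUx => hS ⟨x, hx, U, hU, hUx⟩)
  tfae_finish

/-- For a rooted tree `T`, the following are equivalent: (a) `R(T)` is scattered;
(b) `R(T)` contains no topological copy of the Cantor space `2^ω`;
(c) `T` has no subset order-isomorphic to the binary tree `2^{<ω}`. -/
theorem rayspace_scattered_tfae {T : Type*} [PartialOrder T]
    (htree : IsOrderTree T) (r : T) (hroot : ∀ t : T, r ≤ t) :
    List.TFAE
      [∀ S : Set (RaySpace T), S.Nonempty →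
          ∃ x ∈ S, ∃ U : Set (RaySpace T), IsOpen U ∧ U ∩ S = {x},
        ¬ ∃ f : (ℕ → Bool) → RaySpace T, Topology.IsEmbedding f,
        ¬ ∃ φ : List Bool → T, ∀ s t : List Bool, s <+: t ↔ φ s ≤ φ t] :=
  rayspace_scattered_tfae_general htree
end

section
/- Let T be a pruned rooted tree (every node lies on some ray) and suppose some node t ∈ T has an infinite family (t_α : α < λ) of immediate successors, with λ an infinite cardinal. For each α choose a minimal ray R_α containing t_α. Then {R_α : α < λ} is a closed discrete subset of the ray space R(T) of cardinality λ. -/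
/-! Every ray `R a` passes through `t`. If a ray `S` passes through `t` and some `x > t`, then
any `R a` containing `x` has `ts a ≤ x`, so `ts a ∈ S`; as `S` is a chain, it contains only one
immediate successor of `t`. Hence every point of the ray space has a subbasic neighbourhood
meeting `{R a}` in at most one point, which in the `T₂` space `R(T)` makes `{R a}` closed and
discrete. -/

open Set Topology

theorem isClosed_and_isDiscrete_of_finite_inter {X : Type*} [TopologicalSpace X] [T1Space X]
    {D : Set X} (h : ∀ x, ∃ U ∈ 𝓝 x, (U ∩ D).Finite) : IsClosed D ∧ IsDiscrete D := by
  refine isClosed_and_discrete_iff.2 fun x => Filter.disjoint_principal_right.2 ?_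
  obtain ⟨U, hU, hfin⟩ := h x
  refine mem_nhdsWithin_iff_exists_mem_nhds_inter.2
    ⟨U \ ((U ∩ D) \ {x}), Filter.sdiff_mem hU (hfin.sdiff.isClosed.compl_mem_nhds ?_), ?_⟩
  · exact fun hx => hx.2 rfl
  · rintro y ⟨⟨hyU, hy⟩, hyx⟩ hyD
    exact hy ⟨⟨hyU, hyD⟩, hyx⟩

section Order

variable {T : Type*} [PartialOrder T] {S : Set T} {t x y : T}

theorem IsChain.covBy_le (hS : IsChain (· ≤ ·) S) (hy : t ⋖ y) (hyS : y ∈ S) (htx : t < x)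
    (hxS : x ∈ S) : y ≤ x := by
  rcases hS.total hyS hxS with hyx | hxy
  · exact hyx
  · exact ((hy.eq_or_eq htx.le hxy).resolve_left htx.ne').ge

theorem IsChain.eq_of_covBy (hS : IsChain (· ≤ ·) S) (hx : t ⋖ x) (hy : t ⋖ y) (hxS : x ∈ S)
    (hyS : y ∈ S) : x = y :=
  (hS.covBy_le hx hxS hy.lt hyS).antisymm (hS.covBy_le hy hyS hx.lt hxS)

theorem IsRay.isChain (hS : IsRay S) : IsChain (· ≤ ·) S := hS.2.1

theorem IsRay.mem_of_le (hS : IsRay S) (hx : x ∈ S) (hyx : y ≤ x) : y ∈ S := hS.2.2.1 x hx y hyx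

theorem IsRay.exists_gt (hS : IsRay S) (hx : x ∈ S) : ∃ y ∈ S, x < y := hS.2.2.2 x hx

end Order

namespace RaySpace

variable {T : Type*} [PartialOrder T]

theorem isOpen_setOf_mem_s12 (x : T) : IsOpen {S : RaySpace T | x ∈ S.val} :=
  TopologicalSpace.GenerateOpen.basic _ ⟨x, Or.inl rfl⟩

theorem isOpen_setOf_notMem_s12 (x : T) : IsOpen {S : RaySpace T | x ∉ S.val} :=
  TopologicalSpace.GenerateOpen.basic _ ⟨x, Or.inr rfl⟩

instance : T2Space (RaySpace T) := by
  refine ⟨fun S S' hne => ?_⟩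
  obtain ⟨x, hx⟩ : ∃ x, ¬(x ∈ S.val ↔ x ∈ S'.val) := by
    by_contra! h
    exact hne (Subtype.ext (Set.ext h))
  by_cases hxS : x ∈ S.val
  · have hxS' : x ∉ S'.val := fun h => hx (iff_of_true hxS h)
    exact ⟨_, _, isOpen_setOf_mem_s12 x, isOpen_setOf_notMem_s12 x, hxS, hxS',
      disjoint_left.2 fun _ h h' => h' h⟩
  · have hxS' : x ∈ S'.val := by_contra fun h => hx (iff_of_false hxS h)
    exact ⟨_, _, isOpen_setOf_notMem_s12 x, isOpen_setOf_mem_s12 x, hxS, hxS',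
      disjoint_left.2 fun _ h h' => h h'⟩

variable {ι : Type*} {t : T} {ts : ι → T} {R : ι → RaySpace T}

theorem injective_of_covBy (hinj : Function.Injective ts) (hsucc : ∀ a, t ⋖ ts a)
    (hmem : ∀ a, ts a ∈ (R a).val) : Function.Injective R := fun a b hab =>
  hinj <| (R b).2.isChain.eq_of_covBy (hsucc a) (hsucc b) (hab ▸ hmem a) (hmem b)

theorem exists_nhds_subsingleton_inter_range (hinj : Function.Injective ts)
    (hsucc : ∀ a, t ⋖ ts a) (hmem : ∀ a, ts a ∈ (R a).val) (S : RaySpace T) :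
    ∃ U ∈ 𝓝 S, (U ∩ range R).Subsingleton := by
  by_cases htS : t ∈ S.val
  · obtain ⟨x, hxS, htx⟩ := S.2.exists_gt htS
    have hsuccS : ∀ a, x ∈ (R a).val → ts a ∈ S.val := fun a hx =>
      S.2.mem_of_le hxS ((R a).2.isChain.covBy_le (hsucc a) (hmem a) htx hx)
    refine ⟨_, (isOpen_setOf_mem_s12 x).mem_nhds hxS, ?_⟩
    rintro _ ⟨hxa, a, rfl⟩ _ ⟨hxb, b, rfl⟩
    rw [hinj (S.2.isChain.eq_of_covBy (hsucc a) (hsucc b) (hsuccS a hxa) (hsuccS b hxb))]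
  · refine ⟨_, (isOpen_setOf_notMem_s12 t).mem_nhds htS, ?_⟩
    rintro _ ⟨htR, a, rfl⟩
    exact (htR ((R a).2.mem_of_le (hmem a) (hsucc a).le)).elim

end RaySpace

universe u_1 u_2

theorem minimal_rays_closed_discrete_general {T : Type u_1} [PartialOrder T]
    (t : T) {ι : Type u_2} (ts : ι → T)
    (hinj : Function.Injective ts) (hsucc : ∀ a : ι, t ⋖ ts a)
    (R : ι → RaySpace T) (hmem : ∀ a : ι, ts a ∈ (R a).val) :
    IsClosed (Set.range R) ∧ DiscreteTopology (Set.range R) ∧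
      Cardinal.lift.{u_2} (Cardinal.mk (Set.range R)) = Cardinal.lift.{u_1} (Cardinal.mk ι) := by
  obtain ⟨hclosed, hdiscrete⟩ := isClosed_and_isDiscrete_of_finite_inter fun S =>
    let ⟨U, hU, hsub⟩ := RaySpace.exists_nhds_subsingleton_inter_range hinj hsucc hmem S
    ⟨U, hU, hsub.finite⟩
  exact ⟨hclosed, hdiscrete.to_subtype,
    Cardinal.mk_range_eq_of_injective (RaySpace.injective_of_covBy hinj hsucc hmem)⟩

/-- Let `T` be a pruned rooted tree and let `t ∈ T` have an infinite family `(ts a : a : ι)`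
of pairwise distinct immediate successors. Choosing for each `a` a minimal ray `R a`
containing `ts a`, the set `{R a}` is a closed discrete subset of `R(T)` of cardinality `#ι`. -/
theorem minimal_rays_closed_discrete {T : Type u_1} [PartialOrder T]
    (htree : IsOrderTree T) (r : T) (hroot : ∀ t : T, r ≤ t)
    (hpruned : ∀ t : T, ∃ R : Set T, IsRay R ∧ t ∈ R)
    (t : T) {ι : Type u_2} [Infinite ι] (ts : ι → T)
    (hinj : Function.Injective ts) (hsucc : ∀ a : ι, t ⋖ ts a)
    (R : ι → RaySpace T) (hmem : ∀ a : ι, ts a ∈ (R a).val)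
    (hmin : ∀ a : ι, ∀ R' : RaySpace T, ts a ∈ R'.val → R'.val ⊆ (R a).val →
      R'.val = (R a).val) :
    IsClosed (Set.range R) ∧ DiscreteTopology (Set.range R) ∧
      Cardinal.lift.{u_2} (Cardinal.mk (Set.range R)) = Cardinal.lift.{u_1} (Cardinal.mk ι) :=
  minimal_rays_closed_discrete_general t ts hinj hsucc R hmem
end

section
/- Let G be a graph whose end space Ω(G) is Lindelöf, and let (F_n : n ∈ ω) be a strictly ⊆-increasing sequence of finite subsets of V(G). Then there exists a sequence (ℱ_n : n ∈ ω) such that each ℱ_n is a finite collection of connected components of G \ F_n and every ray of G has a tail in some member of ⋃_n ℱ_n. -/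
open Set Cardinal SimpleGraph Topology

/-- The topology on the end space of a graph `G`: basic open sets are obtained by
fixing the connected component (of the complement of a finite vertex set) in which
the end lives. -/
def endTopology {V : Type*} (G : SimpleGraph V) : TopologicalSpace G.end :=
  TopologicalSpace.generateFrom
    {S | ∃ (K : Finset V) (C : G.ComponentCompl K),
      S = {e : G.end | e.val (Opposite.op K) = C}}

/-- The component `C` of `G ∖ K` contains a ray. -/
def ComponentContainsRay {V : Type*} (G : SimpleGraph V) {K : Finset V}
    (C : G.ComponentCompl K) : Prop :=
  ∃ f : ℕ → V, Function.Injective f ∧ (∀ n : ℕ, G.Adj (f n) (f (n + 1))) ∧ ∀ n : ℕ, f n ∈ C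

/-!
The components of `G ∖ F 0` containing ends are countably many by the Lindelöf property, and
each finite set `F n` meets only finitely many of them. Enumerating them, one distributes these
components into finite blocks, the `n`-th block avoiding `F n`; a component of `G ∖ F 0` avoiding
`F n` is a single component of `G ∖ F n`. The end of a ray lives in some block `n`, and its
component at `F n` then contains a tail of the ray.
-/

open Filter Opposite CategoryTheory

lemma Set.Countable.exists_finite_cover_disjoint {α : Type*} {S : Set α} (hS : S.Countable)
    {T : ℕ → Set α} (hT : ∀ n, (T n).Finite) (h0 : Disjoint S (T 0)) :
    ∃ W : ℕ → Set α, (∀ n, (W n).Finite) ∧ (∀ n, Disjoint (W n) (T n)) ∧ S ⊆ ⋃ n, W n := by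
  obtain ⟨f, hf⟩ := countable_iff_exists_injOn.1 hS
  -- `x` goes into the block just before it first enters `T`, or into block `f x` if it never does.
  refine ⟨fun n => {x ∈ S | x ∉ T n ∧ (x ∈ T (n + 1) ∨ f x = n)}, fun n => ?_,
    fun n => disjoint_left.2 fun x hx => hx.2.1, fun x hx => ?_⟩
  · have hfiber : (S ∩ f ⁻¹' {n}).Finite :=
      (finite_singleton n).subset (image_subset_iff.2 inter_subset_right)
        |>.of_finite_image (hf.mono inter_subset_left)
    refine ((hT (n + 1)).union hfiber).subset ?_
    rintro x ⟨hxS, -, hx | hx⟩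
    exacts [.inl hx, .inr ⟨hxS, hx⟩]
  · by_cases hT' : ∃ m, x ∈ T m
    · obtain ⟨n, hn, hn'⟩ :=
        Nat.exists_not_and_succ_of_not_zero_of_exists (disjoint_left.1 h0 hx) hT'
      exact mem_iUnion.2 ⟨n, hx, hn, .inl hn'⟩
    · exact mem_iUnion.2 ⟨f x, hx, fun h => hT' ⟨_, h⟩, .inr rfl⟩

namespace SimpleGraph

variable {V : Type*} {G : SimpleGraph V}

namespace ComponentCompl

lemma finite_setOf_not_disjoint (K : Set V) {s : Set V} (hs : s.Finite) :
    {C : G.ComponentCompl K | ¬Disjoint (C : Set V) s}.Finite := by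
  refine (hs.biUnion (t := fun v => {C : G.ComponentCompl K | v ∈ C}) fun v _ => ?_).subset
    fun C hC => ?_
  · exact Set.Subsingleton.finite fun C ⟨_, hC⟩ D ⟨_, hD⟩ => hC.symm.trans hD
  · obtain ⟨v, hvC, hvs⟩ := not_disjoint_iff.1 hC
    exact mem_biUnion hvs hvC

lemma reachable_of_disjoint {K L : Set V} {C : G.ComponentCompl K}
    (hC : Disjoint (C : Set V) L) {u w : V} (hu : u ∈ C) (hw : w ∈ C) :
    (G.induce Lᶜ).Reachable ⟨u, Set.disjoint_left.1 hC hu⟩ ⟨w, Set.disjoint_left.1 hC hw⟩ := by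
  classical
  obtain ⟨huK, rfl⟩ := hu
  obtain ⟨hwK, hwC⟩ := hw
  obtain ⟨p⟩ := ConnectedComponent.exact hwC
  have hp : ∀ x ∈ (p.map (Embedding.induce Kᶜ).toHom).support, x ∈ Lᶜ := by
    simp only [Walk.support_map, List.mem_map]
    rintro _ ⟨y, hy, rfl⟩
    refine Set.disjoint_left.1 hC ⟨y.2, ?_⟩
    exact (ConnectedComponent.sound (p.takeUntil y hy).reachable).symm.trans hwC
  exact (p.map _ |>.induce Lᶜ hp).reachable.symm

lemma injOn_hom {K L : Set V} (h : K ⊆ L) {W : Set (G.ComponentCompl K)}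
    (hW : ∀ C ∈ W, Disjoint (C : Set V) L) : InjOn (hom h) (hom h ⁻¹' W) := by
  intro D hD D' _ hDD'
  obtain ⟨v, hvD⟩ := D.nonempty
  obtain ⟨w, hwD'⟩ := D'.nonempty
  have hv : v ∈ D.hom h := D.subset_hom h hvD
  have hw : w ∈ D.hom h := hDD' ▸ D'.subset_hom h hwD'
  obtain ⟨_, rfl⟩ := hvD
  obtain ⟨_, rfl⟩ := hwD'
  exact ConnectedComponent.sound (reachable_of_disjoint (hW _ hD) hv hw)

end ComponentCompl

def endComponent (e : G.end) (K : Finset V) : G.ComponentCompl K := e.val (op K)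

lemma endComponent_hom (e : G.end) {K L : Finset V} (h : K ⊆ L) :
    (endComponent e L).hom (Finset.coe_subset.2 h) = endComponent e K :=
  e.prop (opHomOfLE h)

lemma exists_componentCompl_eventually_mem {K : Set V} {f : ℕ → V}
    (hadj : ∀ n, G.Adj (f n) (f (n + 1))) (hK : ∀ᶠ m in atTop, f m ∉ K) :
    ∃ C : G.ComponentCompl K, ∀ᶠ m in atTop, f m ∈ C := by
  obtain ⟨N, hN⟩ := eventually_atTop.1 hK
  refine ⟨G.componentComplMk (hN N le_rfl), eventually_atTop.2 ⟨N, fun m hm => ?_⟩⟩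
  induction m, hm using Nat.le_induction with
  | base => exact G.componentComplMk_mem _
  | succ m hm ih => exact ComponentCompl.mem_of_adj _ _ ih (hN _ (by omega)) (hadj m)

lemma exists_end_eventually_mem {f : ℕ → V} (hinj : Function.Injective f)
    (hadj : ∀ n, G.Adj (f n) (f (n + 1))) :
    ∃ e : G.end, ∀ K : Finset V, ∀ᶠ m in atTop, f m ∈ endComponent e K := by
  have hK (K : Finset V) : ∀ᶠ m in atTop, f m ∉ (K : Set V) := by
    rw [← Nat.cofinite_eq_atTop]
    exact hinj.tendsto_cofinite K.finite_toSet.compl_mem_cofinite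
  choose C hC using fun K : Finset V => exists_componentCompl_eventually_mem hadj (hK K)
  refine ⟨⟨fun K => C K.unop, fun {K L} h => ?_⟩, hC⟩
  obtain ⟨m, hmK, hmL⟩ := ((hC K.unop).and (hC L.unop)).exists
  change (C K.unop).hom (Finset.coe_subset.2 (le_of_op_hom h)) = C L.unop
  exact (ComponentCompl.hom_eq_iff_not_disjoint _ _ _).2 (not_disjoint_iff.2 ⟨f m, hmK, hmL⟩)

lemma countable_range_endComponent
    (hL : ∀ 𝒰 : Set (Set G.end), (∀ U ∈ 𝒰, IsOpen[endTopology G] U) →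
      ⋃₀ 𝒰 = Set.univ → ∃ 𝒱 ⊆ 𝒰, 𝒱.Countable ∧ ⋃₀ 𝒱 = Set.univ) (K : Finset V) :
    (range fun e : G.end => endComponent e K).Countable := by
  obtain ⟨𝒱, h𝒱, h𝒱c, h𝒱u⟩ :=
    hL (range fun C : G.ComponentCompl K => {e : G.end | endComponent e K = C})
      (by rintro _ ⟨C, rfl⟩; exact .basic _ ⟨K, C, rfl⟩)
      (sUnion_eq_univ_iff.2 fun e => ⟨_, ⟨endComponent e K, rfl⟩, rfl⟩)
  refine (h𝒱c.biUnion (t := fun U _ => (endComponent · K) '' U) fun U hU => ?_).mono ?_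
  · obtain ⟨C, rfl⟩ := h𝒱 hU
    exact (countable_singleton C).mono (by rintro _ ⟨e, he, rfl⟩; exact he)
  · rintro _ ⟨e, rfl⟩
    obtain ⟨U, hU, he⟩ := sUnion_eq_univ_iff.1 h𝒱u e
    exact mem_biUnion hU (mem_image_of_mem _ he)

end SimpleGraph

/-- If the end space `Ω(G)` is Lindelöf and `(F n : n ∈ ω)` is a strictly `⊆`-increasing
sequence of finite sets of vertices, then there is a sequence `(ℱ n : n ∈ ω)` such that
each `ℱ n` is a finite collection of connected components of `G ∖ F n` and every ray of `G`
has a tail in some member of `⋃ n, ℱ n`. -/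
theorem lindelof_imp_property_F {V : Type*} (G : SimpleGraph V)
    (hL : ∀ 𝒰 : Set (Set G.end), (∀ U ∈ 𝒰, IsOpen[endTopology G] U) →
      ⋃₀ 𝒰 = Set.univ → ∃ 𝒱 ⊆ 𝒰, 𝒱.Countable ∧ ⋃₀ 𝒱 = Set.univ)
    (F : ℕ → Finset V) (hmono : ∀ n : ℕ, F n ⊂ F (n + 1)) :
    ∃ ℱ : ∀ n : ℕ, Set (G.ComponentCompl (F n)), (∀ n, (ℱ n).Finite) ∧
      ∀ f : ℕ → V, Function.Injective f → (∀ n : ℕ, G.Adj (f n) (f (n + 1))) →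
        ∃ n : ℕ, ∃ C ∈ ℱ n, ∃ N : ℕ, ∀ m : ℕ, N ≤ m → f m ∈ C := by
  have hF (n : ℕ) : F 0 ⊆ F n :=
    monotone_nat_of_le_succ (fun n => (hmono n).subset) n.zero_le
  obtain ⟨W, hWfin, hWdisj, hcover⟩ :=
    (countable_range_endComponent hL (F 0)).exists_finite_cover_disjoint
      (T := fun n => {C : G.ComponentCompl (F 0) | ¬Disjoint (C : Set V) (F n)})
      (fun n => ComponentCompl.finite_setOf_not_disjoint _ (F n).finite_toSet)
      (disjoint_left.2 fun _ _ hC => hC (ComponentCompl.disjoint_right _).symm)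
  refine ⟨fun n => ComponentCompl.hom (Finset.coe_subset.2 (hF n)) ⁻¹' W n,
    fun n => (hWfin n).preimage ?_, ?_⟩
  · exact ComponentCompl.injOn_hom _ fun C hC => not_not.1 (disjoint_left.1 (hWdisj n) hC)
  intro f hinj hadj
  obtain ⟨e, he⟩ := exists_end_eventually_mem hinj hadj
  obtain ⟨n, hn⟩ := mem_iUnion.1 (hcover ⟨e, rfl⟩)
  refine ⟨n, endComponent e (F n), ?_, eventually_atTop.1 (he (F n))⟩
  rwa [mem_preimage, endComponent_hom e (hF n)]
end
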